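/- Let $U, V$ be $[0,1]$-valued random variables with $\mathbb{P}(U \le u, V \le v) = C(u,v)$ for a copula $C$. With the notation of the previous expectation identity, $\mathbb{E}\Big[K_1\big(\tfrac{u - \zeta_1(U)}{h}\big) K_2\big(\tfrac{v - \zeta_2(V)}{h}\big)\,\mathbb{1}\{U \le u, V \le v\}\Big] = \int_{-1}^{1}\int_{-1}^{1} C\big(\min(u, \zeta_1^{-1}(u - sh)),\ \min(v, \zeta_2^{-1}(v - th))\big)\,k_1(s)\,k_2(t)\,ds\,dt$. -/

import Mathlib

/-!
Since `k` vanishes off `[-1, 1]` and `h > 0`,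
`K((u - z)/h) = ∫_{[-1,1]} k(s) 1{z ≤ u - s h} ds`. Hence the integrand is a
`k₁ ⊗ k₂`-average over `(s, t)` of the indicator of the event
`{U ≤ u, ζ₁(U) ≤ u - s h, V ≤ v, ζ₂(V) ≤ v - t h}`, which the Galois connection turns into
`{U ≤ min u (ζ₁⁻¹(u - s h)), V ≤ min v (ζ₂⁻¹(v - t h))}`, of probability `C(…, …)`.
Fubini then exchanges the expectation with the `(s, t)`-integral.
-/

open MeasureTheory Set

theorem setIntegral_Iic_eq_setIntegral_ite {μ : Measure ℝ} {k : ℝ → ℝ} {S : Set ℝ}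
    (hk : ∀ s ∉ S, k s = 0) (x : ℝ) :
    ∫ s in Iic x, k s ∂μ = ∫ s in S, (if s ≤ x then k s else 0) ∂μ := by
  rw [← integral_indicator measurableSet_Iic, ← setIntegral_eq_integral_of_forall_compl_eq_zero]
  · rfl
  · intro s hs
    simp [indicator_apply, hk s hs]

theorem setIntegral_Iic_sub_div_mul_ite {μ : Measure ℝ} {k : ℝ → ℝ} {S : Set ℝ}
    (hk : ∀ s ∉ S, k s = 0) {h : ℝ} (hh : 0 < h) (x z u : ℝ) :
    (∫ s in Iic ((u - z) / h), k s ∂μ) * (if x ≤ u then 1 else 0) =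
      ∫ s in S, k s * (if x ≤ u ∧ z ≤ u - s * h then 1 else 0) ∂μ := by
  rw [setIntegral_Iic_eq_setIntegral_ite hk, ← integral_mul_const]
  refine integral_congr_ae (Filter.Eventually.of_forall fun s => ?_)
  have hs : s ≤ (u - z) / h ↔ z ≤ u - s * h := by
    rw [le_div_iff₀ hh]
    constructor <;> intro <;> linarith
  by_cases hx : x ≤ u <;> simp [hx, hs]

theorem setIntegral_Iic_mul_setIntegral_Iic_mul_ite {k₁ k₂ : ℝ → ℝ} {S T : Set ℝ}
    (hk₁ : ∀ s ∉ S, k₁ s = 0) (hk₂ : ∀ t ∉ T, k₂ t = 0) {h : ℝ} (hh : 0 < h) (x y z w u v : ℝ) :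
    (∫ s in Iic ((u - z) / h), k₁ s) * (∫ t in Iic ((v - w) / h), k₂ t) *
        (if x ≤ u ∧ y ≤ v then 1 else 0) =
      ∫ p, k₁ p.1 * k₂ p.2 *
          (if (x ≤ u ∧ z ≤ u - p.1 * h) ∧ (y ≤ v ∧ w ≤ v - p.2 * h) then 1 else 0)
        ∂(volume.restrict S).prod (volume.restrict T) := by
  have hsplit : (if x ≤ u ∧ y ≤ v then (1 : ℝ) else 0) =
      (if x ≤ u then 1 else 0) * (if y ≤ v then 1 else 0) := by
    rw [ite_zero_mul_ite_zero, one_mul]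
  rw [hsplit, mul_mul_mul_comm, setIntegral_Iic_sub_div_mul_ite hk₁ hh,
    setIntegral_Iic_sub_div_mul_ite hk₂ hh, ← integral_prod_mul]
  refine integral_congr_ae (Filter.Eventually.of_forall fun p => ?_)
  dsimp only
  rw [mul_mul_mul_comm, ite_zero_mul_ite_zero, one_mul]

section Fubini

variable {Ω α : Type*} [MeasurableSpace Ω] [MeasurableSpace α] {μ : Measure Ω} {ν : Measure α}
  {f : α → ℝ} {E : Set (Ω × α)}

theorem integrable_mul_indicator_prod [IsFiniteMeasure μ] (hf : Integrable f ν)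
    (hE : MeasurableSet E) :
    Integrable (fun p : Ω × α => f p.2 * E.indicator 1 p) (μ.prod ν) := by
  refine ((integrable_const (1 : ℝ)).mul_prod hf.norm).mono'
    (hf.aestronglyMeasurable.comp_snd.mul
      ((measurable_const.indicator hE).aestronglyMeasurable)) ?_
  refine Filter.Eventually.of_forall fun p => ?_
  by_cases hp : p ∈ E <;> simp [hp]

theorem integral_mul_indicator_eq_mul_measureReal (hE : MeasurableSet E) (a : α) :
    ∫ ω, f a * E.indicator 1 (ω, a) ∂μ = f a * μ.real {ω | (ω, a) ∈ E} := by
  rw [integral_const_mul]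
  congr 1
  exact integral_indicator_one (measurable_prodMk_right hE)

theorem integrable_mul_measureReal_section [IsFiniteMeasure μ] [SFinite ν] (hf : Integrable f ν)
    (hE : MeasurableSet E) :
    Integrable (fun a => f a * μ.real {ω | (ω, a) ∈ E}) ν := by
  simpa only [integral_mul_indicator_eq_mul_measureReal hE] using
    (integrable_mul_indicator_prod (μ := μ) hf hE).integral_prod_right

theorem integral_integral_mul_indicator_swap [IsFiniteMeasure μ] [SFinite ν]
    (hf : Integrable f ν) (hE : MeasurableSet E) :
    ∫ ω, ∫ a, f a * E.indicator 1 (ω, a) ∂ν ∂μ = ∫ a, f a * μ.real {ω | (ω, a) ∈ E} ∂ν := by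
  rw [integral_integral_swap (integrable_mul_indicator_prod hf hE)]
  simp only [integral_mul_indicator_eq_mul_measureReal hE]

end Fubini

theorem measurable_comp_of_galois {Ω : Type*} [MeasurableSpace Ω] {U : Ω → ℝ} (hU : Measurable U)
    {S : Set ℝ} (hUS : ∀ ω, U ω ∈ S) {ζ ζinv : ℝ → ℝ}
    (hgal : ∀ x ∈ S, ∀ y, ζ x ≤ y ↔ x ≤ ζinv y) : Measurable (ζ ∘ U) := by
  refine measurable_of_Iic fun y => ?_
  convert measurableSet_le hU (measurable_const (a := ζinv y)) using 1
  ext ω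
  exact hgal _ (hUS ω) y

theorem measurableSet_le_and_comp_le_sub_mul {Ω : Type*} [MeasurableSpace Ω] {U : Ω → ℝ}
    (hU : Measurable U) {ζ : ℝ → ℝ} (hζU : Measurable (ζ ∘ U)) (u h : ℝ) :
    MeasurableSet {p : Ω × ℝ | U p.1 ≤ u ∧ ζ (U p.1) ≤ u - p.2 * h} :=
  (measurableSet_le (hU.comp measurable_fst) measurable_const).inter
    (measurableSet_le (hζU.comp measurable_fst)
      (measurable_const.sub (measurable_snd.mul_const h)))

theorem stmt_9_general {Ω : Type*} [MeasureSpace Ω] [IsProbabilityMeasure (volume : Measure Ω)]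
    (U V : Ω → ℝ) (hU : Measurable U) (hV : Measurable V)
    (hU_range : ∀ ω, U ω ∈ Set.Icc (0:ℝ) 1) (hV_range : ∀ ω, V ω ∈ Set.Icc (0:ℝ) 1)
    (C : ℝ → ℝ → ℝ)
    (hC : ∀ u v, (volume {ω | U ω ≤ u ∧ V ω ≤ v}).toReal = C u v)
    (k₁ k₂ : ℝ → ℝ)
    (hk₁_supp : ∀ s, s ∉ Set.Icc (-1:ℝ) 1 → k₁ s = 0)
    (hk₂_supp : ∀ t, t ∉ Set.Icc (-1:ℝ) 1 → k₂ t = 0)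
    (hk₁_int : Integrable k₁) (hk₂_int : Integrable k₂)
    (K₁ K₂ : ℝ → ℝ)
    (hK₁ : ∀ x, K₁ x = ∫ s in Set.Iic x, k₁ s)
    (hK₂ : ∀ x, K₂ x = ∫ t in Set.Iic x, k₂ t)
    (ζ₁ ζ₂ ζ₁inv ζ₂inv : ℝ → ℝ)
    (hgal₁ : ∀ x ∈ Set.Icc (0:ℝ) 1, ∀ y : ℝ, ζ₁ x ≤ y ↔ x ≤ ζ₁inv y)
    (hgal₂ : ∀ x ∈ Set.Icc (0:ℝ) 1, ∀ y : ℝ, ζ₂ x ≤ y ↔ x ≤ ζ₂inv y)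
    (u v : ℝ)
    (h : ℝ) (hh : h ∈ Set.Ioo (0:ℝ) 1) :
    ∫ ω, K₁ ((u - ζ₁ (U ω)) / h) * K₂ ((v - ζ₂ (V ω)) / h) *
        (if U ω ≤ u ∧ V ω ≤ v then (1:ℝ) else 0) =
      ∫ s in Set.Icc (-1:ℝ) 1, ∫ t in Set.Icc (-1:ℝ) 1,
        C (min u (ζ₁inv (u - s * h))) (min v (ζ₂inv (v - t * h))) * k₁ s * k₂ t := by
  set I := Icc (-1 : ℝ) 1
  set ν := (volume.restrict I).prod (volume.restrict I)
  set E : Set (Ω × ℝ × ℝ) := {p | (U p.1 ≤ u ∧ ζ₁ (U p.1) ≤ u - p.2.1 * h) ∧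
    (V p.1 ≤ v ∧ ζ₂ (V p.1) ≤ v - p.2.2 * h)}
  have hE : MeasurableSet E := by
    have hEU := measurableSet_le_and_comp_le_sub_mul hU
      (measurable_comp_of_galois hU hU_range hgal₁) u h
    have hEV := measurableSet_le_and_comp_le_sub_mul hV
      (measurable_comp_of_galois hV hV_range hgal₂) v h
    exact (hEU.preimage (measurable_fst.prodMk (measurable_fst.comp measurable_snd))).inter
      (hEV.preimage (measurable_fst.prodMk (measurable_snd.comp measurable_snd)))
  have hk_int : Integrable (fun p : ℝ × ℝ => k₁ p.1 * k₂ p.2) ν :=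
    hk₁_int.integrableOn.mul_prod hk₂_int.integrableOn
  have hsection : ∀ p : ℝ × ℝ, volume.real {ω | (ω, p) ∈ E} =
      C (min u (ζ₁inv (u - p.1 * h))) (min v (ζ₂inv (v - p.2 * h))) := by
    intro p
    rw [← hC, measureReal_def]
    congr 2
    ext ω
    simp only [E, mem_ofPred_eq, le_min_iff, hgal₁ _ (hU_range ω), hgal₂ _ (hV_range ω)]
  have hpointwise : ∀ ω, K₁ ((u - ζ₁ (U ω)) / h) * K₂ ((v - ζ₂ (V ω)) / h) *
      (if U ω ≤ u ∧ V ω ≤ v then (1:ℝ) else 0) =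
        ∫ p, k₁ p.1 * k₂ p.2 * E.indicator 1 (ω, p) ∂ν := by
    intro ω
    rw [hK₁, hK₂, setIntegral_Iic_mul_setIntegral_Iic_mul_ite hk₁_supp hk₂_supp hh.1]
    simp only [E, indicator_apply, mem_ofPred_eq, Pi.one_apply]
    rfl
  calc _ = ∫ ω, ∫ p, k₁ p.1 * k₂ p.2 * E.indicator 1 (ω, p) ∂ν :=
        integral_congr_ae (.of_forall hpointwise)
    _ = ∫ p, k₁ p.1 * k₂ p.2 *
          C (min u (ζ₁inv (u - p.1 * h))) (min v (ζ₂inv (v - p.2 * h))) ∂ν := by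
      rw [integral_integral_mul_indicator_swap hk_int hE]
      simp only [hsection]
    _ = _ := by
      rw [integral_prod]
      · congr 1 with s
        congr 1 with t
        ring
      · simpa only [hsection] using integrable_mul_measureReal_section (μ := volume) hk_int hE

theorem stmt_9 {Ω : Type*} [MeasureSpace Ω] [IsProbabilityMeasure (volume : Measure Ω)]
    (U V : Ω → ℝ) (hU : Measurable U) (hV : Measurable V)
    (hU_range : ∀ ω, U ω ∈ Set.Icc (0:ℝ) 1) (hV_range : ∀ ω, V ω ∈ Set.Icc (0:ℝ) 1)
    (C : ℝ → ℝ → ℝ)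
    (hC : ∀ u v, (volume {ω | U ω ≤ u ∧ V ω ≤ v}).toReal = C u v)
    (k₁ k₂ : ℝ → ℝ)
    (hk₁_pos : ∀ s, 0 ≤ k₁ s) (hk₂_pos : ∀ t, 0 ≤ k₂ t)
    (hk₁_supp : ∀ s, s ∉ Set.Icc (-1:ℝ) 1 → k₁ s = 0)
    (hk₂_supp : ∀ t, t ∉ Set.Icc (-1:ℝ) 1 → k₂ t = 0)
    (hk₁_int : Integrable k₁) (hk₂_int : Integrable k₂)
    (hk₁_one : ∫ s, k₁ s = 1) (hk₂_one : ∫ t, k₂ t = 1)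
    (K₁ K₂ : ℝ → ℝ)
    (hK₁ : ∀ x, K₁ x = ∫ s in Set.Iic x, k₁ s)
    (hK₂ : ∀ x, K₂ x = ∫ t in Set.Iic x, k₂ t)
    (ζ₁ ζ₂ ζ₁inv ζ₂inv : ℝ → ℝ)
    (hζ₁_mono : MonotoneOn ζ₁ (Set.Icc 0 1)) (hζ₂_mono : MonotoneOn ζ₂ (Set.Icc 0 1))
    (hgal₁ : ∀ x ∈ Set.Icc (0:ℝ) 1, ∀ y : ℝ, ζ₁ x ≤ y ↔ x ≤ ζ₁inv y)
    (hgal₂ : ∀ x ∈ Set.Icc (0:ℝ) 1, ∀ y : ℝ, ζ₂ x ≤ y ↔ x ≤ ζ₂inv y)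
    (u v : ℝ) (hu : u ∈ Set.Icc (0:ℝ) 1) (hv : v ∈ Set.Icc (0:ℝ) 1)
    (h : ℝ) (hh : h ∈ Set.Ioo (0:ℝ) 1) :
    ∫ ω, K₁ ((u - ζ₁ (U ω)) / h) * K₂ ((v - ζ₂ (V ω)) / h) *
        (if U ω ≤ u ∧ V ω ≤ v then (1:ℝ) else 0) =
      ∫ s in Set.Icc (-1:ℝ) 1, ∫ t in Set.Icc (-1:ℝ) 1,
        C (min u (ζ₁inv (u - s * h))) (min v (ζ₂inv (v - t * h))) * k₁ s * k₂ t :=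
  stmt_9_general U V hU hV hU_range hV_range C hC k₁ k₂ hk₁_supp hk₂_supp hk₁_int hk₂_int K₁ K₂ hK₁
    hK₂ ζ₁ ζ₂ ζ₁inv ζ₂inv hgal₁ hgal₂ u v h hh
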